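/- Let Ω₁, Ω₂ ⊂ ℝ^{n+1} be disjoint domains with harmonic measures ω₁, ω₂ that are mutually absolutely continuous on a Borel set E ⊂ ∂Ω₁ ∩ ∂Ω₂. Let ξ ∈ E be a point such that: the density h(ξ) = lim_{r→0} ω₂(B(ξ, r))/ω₁(B(ξ, r)) exists and lies in (0, ∞), ξ is a Lebesgue point of h = dω₂/dω₁ with respect to ω₁, and lim_{r→0} ωᵢ(E ∩ B(ξ, r))/ωᵢ(B(ξ, r)) = 1 for i = 1, 2. Let c_j ≥ 0 and r_j → 0 be such that ω₁^j := c_j·T_{ξ,r_j}[ω₁] converges weakly to a Radon measure ω₁^∞. Then ω₂^j := c_j·T_{ξ,r_j}[ω₂] converges weakly to h(ξ)·ω₁^∞. -/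

import Mathlib

open MeasureTheory Metric Filter Topology Set
open scoped ENNReal NNReal

noncomputable section

/-- `Euc N` is the Euclidean space `ℝ^N`. -/
abbrev Euc (N : ℕ) := EuclideanSpace ℝ (Fin N)

/-- A domain: a connected open subset of Euclidean space. -/
def DomainSet {N : ℕ} (Ω : Set (Euc N)) : Prop := IsOpen Ω ∧ IsConnected Ω

/-- Subharmonic: continuous and satisfying the sub-mean value property on balls. -/
def IsSubharmonicOn {N : ℕ} (u : Euc N → ℝ) (U : Set (Euc N)) : Prop :=
  ContinuousOn u U ∧
    ∀ x ∈ U, ∀ r : ℝ, 0 < r → closedBall x r ⊆ U → u x ≤ ⨍ y in closedBall x r, u y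

/-- Harmonic: continuous and satisfying the mean value property on balls. -/
def IsHarmonicOn {N : ℕ} (u : Euc N → ℝ) (U : Set (Euc N)) : Prop :=
  ContinuousOn u U ∧
    ∀ x ∈ U, ∀ r : ℝ, 0 < r → closedBall x r ⊆ U → u x = ⨍ y in closedBall x r, u y

/-- The Perron solution of the Dirichlet problem in `Ω` with boundary data `f`. -/
def perron {N : ℕ} (Ω : Set (Euc N)) (f : Euc N → ℝ) (x : Euc N) : ℝ :=
  sSup {t | ∃ u : Euc N → ℝ, IsSubharmonicOn u Ω ∧
    (∀ ξ ∈ frontier Ω, Filter.limsup u (𝓝[Ω] ξ) ≤ f ξ) ∧ u x = t}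

/-- `ω` is the harmonic measure of `Ω` with pole at `p`: a finite measure supported on
`∂Ω` integrating bounded continuous boundary data to the Perron solution at `p`. -/
def IsHarmonicMeasure {N : ℕ} (Ω : Set (Euc N)) (p : Euc N) (ω : Measure (Euc N)) : Prop :=
  IsFiniteMeasure ω ∧ ω (frontier Ω)ᶜ = 0 ∧
    ∀ f : Euc N → ℝ, Continuous f → Bornology.IsBounded (Set.range f) →
      ∫ x, f x ∂ω = perron Ω f p

/-- Wiener regularity: every boundary point is regular for the Dirichlet problem. -/
def WienerRegular {N : ℕ} (Ω : Set (Euc N)) : Prop :=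
  ∀ ξ ∈ frontier Ω, ∀ f : Euc N → ℝ, Continuous f → Bornology.IsBounded (Set.range f) →
    Tendsto (perron Ω f) (𝓝[Ω] ξ) (𝓝 (f ξ))

/-- `u` is the Green function of `Ω` with pole `p`, extended by `0` outside `Ω`. -/
def IsGreenFunction {N : ℕ} (Ω : Set (Euc N)) (p : Euc N) (u : Euc N → ℝ) : Prop :=
  (∀ x, x ∉ Ω → u x = 0) ∧ (∀ x, 0 ≤ u x) ∧ IsHarmonicOn u (Ω \ {p}) ∧
    ∃ h : Euc N → ℝ, IsHarmonicOn h Ω ∧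
      ∀ x ∈ Ω \ {p}, u x = ‖x - p‖ ^ (2 - (N : ℝ)) - h x

/-- `s`-dimensional Hausdorff content. -/
def hContent {N : ℕ} (s : ℝ) (A : Set (Euc N)) : ℝ≥0∞ :=
  ⨅ (t : ℕ → Set (Euc N)) (_ : A ⊆ ⋃ i, t i), ∑' i, EMetric.diam (t i) ^ s

/-- `F` is `n`-rectifiable: up to an `H^n`-null set it is covered by countably many
Lipschitz images of `ℝ^n`. -/
def IsRectifiableSet (n : ℕ) (F : Set (Euc (n+1))) : Prop :=
  ∃ f : ℕ → EuclideanSpace ℝ (Fin n) → Euc (n+1),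
    (∀ i, ∃ K : ℝ≥0, LipschitzWith K (f i)) ∧
      μH[(n : ℝ)] (F \ ⋃ i, Set.range (f i)) = 0

/-- Mutual absolute continuity of two measures. -/
def MutuallyAC {N : ℕ} (μ ν : Measure (Euc N)) : Prop := μ ≪ ν ∧ ν ≪ μ

/-- The rescaling map `T_{a,r}(x) = (x - a)/r`. -/
def scaleMap {N : ℕ} (a : Euc N) (r : ℝ) : Euc N → Euc N := fun x => r⁻¹ • (x - a)

/-- Weak-* convergence of a sequence of measures against compactly supported
continuous functions. -/
def WeakLim {N : ℕ} (μ : ℕ → Measure (Euc N)) (ν : Measure (Euc N)) : Prop :=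
  ∀ f : Euc N → ℝ, Continuous f → HasCompactSupport f →
    Tendsto (fun j => ∫ x, f x ∂(μ j)) atTop (𝓝 (∫ x, f x ∂ν))

/-- `ν` is a tangent measure of `μ` at `ξ`. -/
def IsTangentMeasure {N : ℕ} (μ : Measure (Euc N)) (ξ : Euc N) (ν : Measure (Euc N)) : Prop :=
  ν ≠ 0 ∧ ∃ c r : ℕ → ℝ, (∀ j, 0 < c j) ∧ (∀ j, 0 < r j) ∧ Tendsto r atTop (𝓝 0) ∧
    WeakLim (fun j => ENNReal.ofReal (c j) • (μ.map (scaleMap ξ (r j)))) ν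

/-- The cone of (positive multiples of) `n`-dimensional Hausdorff measures restricted
to `n`-planes through the origin in `ℝ^{n+1}`. -/
def flatCone (n : ℕ) : Set (Measure (Euc (n+1))) :=
  {μ | ∃ (c : ℝ) (V : Submodule ℝ (Euc (n+1))), 0 < c ∧ Module.finrank ℝ V = n ∧
    μ = ENNReal.ofReal c • (μH[(n : ℝ)].restrict (V : Set (Euc (n+1))))}

/-- The `β_{μ,1}(ξ,r)` coefficient: `inf_L r^{-n} ∫_{B(ξ,r)} dist(x,L)/r dμ(x)` over
affine `n`-planes `L`. -/
def beta1 (n : ℕ) (μ : Measure (Euc (n+1))) (ξ : Euc (n+1)) (r : ℝ) : ℝ≥0∞ :=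
  ⨅ (L : AffineSubspace ℝ (Euc (n+1))) (_ : Module.finrank ℝ L.direction = n),
    (∫⁻ x in closedBall ξ r, ENNReal.ofReal (infDist x (L : Set (Euc (n+1)))) ∂μ) /
      ENNReal.ofReal (r ^ (n + 1))

/-- The quantity `s^{-2} ∫_{B(ξ,s)} |∇u(y)|²/|y-ξ|^{n-1} dy`. -/
def gradTerm (n : ℕ) (u : Euc (n+1) → ℝ) (ξ : Euc (n+1)) (s : ℝ) : ℝ≥0∞ :=
  (∫⁻ y in ball ξ s, ((‖fderiv ℝ u y‖₊ : ℝ≥0∞) ^ 2) / ENNReal.ofReal (‖y - ξ‖ ^ (n - 1))) /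
    ENNReal.ofReal (s ^ 2)

/-- The Alt–Caffarelli–Friedman functional `γ(ξ,s)`. -/
def acfGamma (n : ℕ) (u₁ u₂ : Euc (n+1) → ℝ) (ξ : Euc (n+1)) (s : ℝ) : ℝ≥0∞ :=
  gradTerm n u₁ ξ s * gradTerm n u₂ ξ s

/-- `P_{γ,μ}(B(x,r)) = Σ_{j≥0} 2^{-jγ} Θ_μ(B(x,2^j r))`. -/
def Pgamma (n : ℕ) (γ : ℝ) (μ : Measure (Euc (n+1))) (x : Euc (n+1)) (r : ℝ) : ℝ≥0∞ :=
  ∑' j : ℕ, ENNReal.ofReal ((2 : ℝ) ^ (-(j : ℝ) * γ)) *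
    (μ (closedBall x ((2 : ℝ) ^ j * r)) / ENNReal.ofReal (((2 : ℝ) ^ j * r) ^ n))

/-- `B(x,r)` is an `a`-`P_{γ,μ}`-doubling ball. -/
def PDoubling (n : ℕ) (γ a : ℝ) (μ : Measure (Euc (n+1))) (x : Euc (n+1)) (r : ℝ) : Prop :=
  Pgamma n γ μ x r ≤ ENNReal.ofReal a * (μ (closedBall x r) / ENNReal.ofReal (r ^ n))

/-- The `n`-dimensional Riesz kernel `K(x) = x/|x|^{n+1}` in `ℝ^{n+1}`. -/
def rieszKernel (n : ℕ) (x : Euc (n+1)) : Euc (n+1) := (‖x‖ ^ (n + 1))⁻¹ • x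

/-- The truncated Riesz transform `R_r μ(x) = ∫_{|x-y|>r} K(x-y) dμ(y)`. -/
def truncRiesz (n : ℕ) (μ : Measure (Euc (n+1))) (r : ℝ) (x : Euc (n+1)) : Euc (n+1) :=
  ∫ y in {y | r < dist x y}, rieszKernel n (x - y) ∂μ

/-- The set `E_m` of points of `E` with doubling harmonic measures, two-sided
interior volume, and small `β₁` at all scales below `1/m`. -/
def goodSet (n : ℕ) (Ω₁ Ω₂ : Set (Euc (n+1))) (ω₁ ω₂ : Measure (Euc (n+1)))
    (E : Set (Euc (n+1))) (ε : ℝ) (m : ℕ) : Set (Euc (n+1)) :=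
  {ξ ∈ E | ∀ r : ℝ, 0 < r → r < 1 / (m : ℝ) →
    ω₁ (closedBall ξ (2 * r)) ≤ (m : ℝ≥0∞) * ω₁ (closedBall ξ r) ∧
    ω₂ (closedBall ξ (2 * r)) ≤ (m : ℝ≥0∞) * ω₂ (closedBall ξ r) ∧
    ENNReal.ofReal (r ^ (n + 1) / (m : ℝ)) ≤ volume (closedBall ξ r ∩ Ω₁) ∧
    ENNReal.ofReal (r ^ (n + 1) / (m : ℝ)) ≤ volume (closedBall ξ r ∩ Ω₂) ∧
    beta1 n ω₁ ξ r < ENNReal.ofReal ε * ω₁ (closedBall ξ r) / ENNReal.ofReal (r ^ n)}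

/-- `ξ` is a point of `Γ`: positive finite density `h(ξ) = dω₂/dω₁(ξ)` exists,
`ξ` is an `ω₁`-Lebesgue point of `h`, and `E` has density one at `ξ` for both measures. -/
def GammaPt (n : ℕ) (ω₁ ω₂ : Measure (Euc (n+1))) (E : Set (Euc (n+1)))
    (h : Euc (n+1) → ℝ) (ξ : Euc (n+1)) : Prop :=
  0 < h ξ ∧
  Tendsto (fun r : ℝ => ω₂ (closedBall ξ r) / ω₁ (closedBall ξ r)) (𝓝[>] 0)
    (𝓝 (ENNReal.ofReal (h ξ))) ∧
  Tendsto (fun r : ℝ =>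
      (∫⁻ x in closedBall ξ r, ENNReal.ofReal |h x - h ξ| ∂ω₁) / ω₁ (closedBall ξ r))
    (𝓝[>] 0) (𝓝 0) ∧
  Tendsto (fun r : ℝ => ω₁ (E ∩ closedBall ξ r) / ω₁ (closedBall ξ r)) (𝓝[>] 0) (𝓝 1) ∧
  Tendsto (fun r : ℝ => ω₂ (E ∩ closedBall ξ r) / ω₂ (closedBall ξ r)) (𝓝[>] 0) (𝓝 1)

/-- `F_{B(0,r)}(μ,ν)`: sup of `∫ f dμ - ∫ f dν` over `1`-Lipschitz functions
supported in the closed ball of radius `r`. -/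
def Fdist {N : ℕ} (r : ℝ) (μ ν : Measure (Euc N)) : ℝ :=
  sSup {t | ∃ f : Euc N → ℝ, LipschitzWith 1 f ∧ (∀ x ∉ closedBall (0 : Euc N) r, f x = 0) ∧
    t = ∫ x, f x ∂μ - ∫ x, f x ∂ν}

/-- `F_r(μ) = ∫ (r - |z|)₊ dμ(z)`. -/
def Fr {N : ℕ} (r : ℝ) (μ : Measure (Euc N)) : ℝ := ∫ x, max (r - ‖x‖) 0 ∂μ

/-- The distance `d_r(μ, 𝓜)` from `μ` to a cone of measures `𝓜`. -/
def dCone {N : ℕ} (r : ℝ) (μ : Measure (Euc N)) (M : Set (Measure (Euc N))) : ℝ :=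
  sInf {t | ∃ ν ∈ M, Fr r ν = 1 ∧ t = Fdist r ((ENNReal.ofReal (Fr r μ))⁻¹ • μ) ν}

/-- `δ₀` is a constant for which Bourgain's estimate holds in `ℝ^{n+1}`. -/
def BourgainEstimateHolds (n : ℕ) (δ₀ : ℝ) : Prop :=
  0 < δ₀ ∧ ∀ s : ℝ, (n : ℝ) - 1 < s → s ≤ (n : ℝ) + 1 →
    ∃ c : ℝ, 0 < c ∧
      ∀ Ω : Set (Euc (n+1)), DomainSet Ω →
      ∀ ω : Euc (n+1) → Measure (Euc (n+1)), (∀ x ∈ Ω, IsHarmonicMeasure Ω x (ω x)) →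
      ∀ ξ ∈ frontier Ω, ∀ r : ℝ, 0 < r →
      ∀ x ∈ closedBall ξ (δ₀ * r) ∩ Ω,
        ENNReal.ofReal c * hContent s (closedBall ξ (δ₀ * r) \ Ω) /
            ENNReal.ofReal ((δ₀ * r) ^ s)
          ≤ (ω x) (closedBall ξ r)

/-! Testing against `f`, the difference `c_j ∫ f ∘ T dω₂ - h(ξ) c_j ∫ f ∘ T dω₁` is at most
`sup |f|` times `c_j` times the defect on `B(ξ, r_j R)`: the masses of `ω₁`, `ω₂` off `E` plus the
`L¹(ω₁|E)` distance from `dω₂/dω₁` to the constant `h(ξ)`. At a point of `Γ` this defect is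
`o(ω₁(B(ξ, s)))` as `s → 0`, whereas `c_j ω₁(B(ξ, r_j R))` stays bounded because `c_j T[ω₁]`
converges weakly. The `L¹` distance is split as `|t| = 2 t⁺ - t`: the positive part is controlled by
the Lebesgue point condition, the mean by the limit `ω₂(B)/ω₁(B) → h(ξ)`. -/

open Asymptotics

namespace ENNReal

variable {ι : Type*} {l : Filter ι} {u v : ι → ℝ≥0∞}

lemma eventually_ne_top_of_tendsto_div {b : ℝ≥0∞} (hv : ∀ i, v i ≠ ∞) (hb : b ≠ ∞)
    (h : Tendsto (fun i => u i / v i) l (𝓝 b)) :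
    ∀ᶠ i in l, u i ≠ ∞ ∧ (v i = 0 → u i = 0) := by
  filter_upwards [h.eventually (eventually_ne_nhds hb)] with i hi
  refine ⟨fun hu => hi ?_, fun hv0 => ?_⟩
  · rw [hu, ENNReal.top_div_of_ne_top (hv i)]
  · by_contra hu
    exact hi (by rw [hv0, ENNReal.div_zero hu])

lemma isLittleO_toReal_sub_of_tendsto_div {a : ℝ} (ha : 0 ≤ a) (hv : ∀ i, v i ≠ ∞)
    (h : Tendsto (fun i => u i / v i) l (𝓝 (ENNReal.ofReal a))) :
    (fun i => (u i).toReal - a * (v i).toReal) =o[l] fun i => (v i).toReal := by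
  have hreal : Tendsto (fun i => (u i).toReal / (v i).toReal - a) l (𝓝 0) := by
    have := ((ENNReal.tendsto_toReal ofReal_ne_top).comp h).sub_const a
    simpa [Function.comp_def, ENNReal.toReal_div, ENNReal.toReal_ofReal ha] using this
  have hfactor : ∀ᶠ i in l, ((u i).toReal / (v i).toReal - a) * (v i).toReal
      = (u i).toReal - a * (v i).toReal := by
    filter_upwards [eventually_ne_top_of_tendsto_div hv ofReal_ne_top h] with i hi
    rcases eq_or_ne (v i) 0 with hv0 | hv0
    · simp [hv0, hi.2 hv0]
    · field_simp [ENNReal.toReal_ne_zero.2 ⟨hv0, hv i⟩]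
  simpa using (((isLittleO_one_iff ℝ).2 hreal).mul_isBigO (isBigO_refl _ l)).congr' hfactor
    (Eventually.of_forall fun _ => one_mul _)

end ENNReal

namespace MeasureTheory

variable {α : Type*} [MeasurableSpace α]

lemma abs_integral_le_of_forall_notMem_eq_zero {μ : Measure α} [IsFiniteMeasure μ]
    {B : Set α} {g : α → ℝ} {M : ℝ} (hgM : ∀ x, |g x| ≤ M) (hgB : ∀ x ∉ B, g x = 0) :
    |∫ x, g x ∂μ| ≤ M * μ.real B := by
  rw [← setIntegral_eq_integral_of_forall_compl_eq_zero hgB]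
  exact norm_setIntegral_le_of_norm_le_const (measure_lt_top _ _) fun x _ =>
    (Real.norm_eq_abs _).trans_le (hgM x)

lemma isLittleO_measureReal_diff_of_tendsto {ι : Type*} {l : Filter ι}
    {μ : Measure α} [IsFiniteMeasure μ] {E : Set α} (hE : MeasurableSet E) {B : ι → Set α}
    (h : Tendsto (fun i => μ (E ∩ B i) / μ (B i)) l (𝓝 1)) :
    (fun i => μ.real (B i \ E)) =o[l] fun i => μ.real (B i) := by
  rw [← ENNReal.ofReal_one] at h
  refine (ENNReal.isLittleO_toReal_sub_of_tendsto_div zero_le_one (fun _ => measure_ne_top μ _)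
    h).neg_left.congr_left fun i => ?_
  have := measureReal_inter_add_sdiff (μ := μ) (s := B i) hE
  rw [inter_comm] at this
  simp only [← measureReal_def]
  linarith

section RadonNikodym

variable {ν₁ ν₂ : Measure α} [IsFiniteMeasure ν₁] [IsFiniteMeasure ν₂]
  {ρ k : α → ℝ≥0∞} {a : ℝ} {B : Set α}

/-- `ρ` is not assumed measurable, so it cannot stand in for `ν₂.rnDeriv ν₁`: it only enters
through `ν₂ A = ∫⁻ x in A, ρ x ∂ν₁`. -/
lemma setIntegral_max_toReal_rnDeriv_sub_le (ha : 0 ≤ a) (hρ : ν₂ = ν₁.withDensity ρ)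
    (hρk : ∀ x, ρ x ≤ ENNReal.ofReal a + k x) (hB : MeasurableSet B)
    (hk : ∫⁻ x in B, k x ∂ν₁ ≠ ∞) :
    ∫ x in B, max ((ν₂.rnDeriv ν₁ x).toReal - a) 0 ∂ν₁ ≤ (∫⁻ x in B, k x ∂ν₁).toReal := by
  set g := fun x => (ν₂.rnDeriv ν₁ x).toReal
  have hg : Measurable g := (Measure.measurable_rnDeriv _ _).ennreal_toReal
  have hac : ν₂ ≪ ν₁ := hρ ▸ withDensity_absolutelyContinuous _ _
  set P := B ∩ {x | a ≤ g x}
  have hP : MeasurableSet P := hB.inter (measurableSet_le measurable_const hg)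
  have hkP : ∫⁻ x in P, k x ∂ν₁ ≤ ∫⁻ x in B, k x ∂ν₁ := lintegral_mono_set inter_subset_left
  have hup : ν₂ P ≤ ENNReal.ofReal a * ν₁ P + ∫⁻ x in P, k x ∂ν₁ :=
    calc ν₂ P = ∫⁻ x in P, ρ x ∂ν₁ := by rw [hρ, withDensity_apply _ hP]
      _ ≤ ∫⁻ x in P, (ENNReal.ofReal a + k x) ∂ν₁ := lintegral_mono hρk
      _ = _ := by rw [lintegral_add_left measurable_const, setLIntegral_const]
  have hupReal : ν₂.real P ≤ a * ν₁.real P + (∫⁻ x in P, k x ∂ν₁).toReal := by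
    have hfin : ENNReal.ofReal a * ν₁ P + ∫⁻ x in P, k x ∂ν₁ ≠ ∞ :=
      ENNReal.add_ne_top.2 ⟨ENNReal.mul_ne_top ENNReal.ofReal_ne_top (measure_ne_top _ _),
        ne_top_of_le_ne_top hk hkP⟩
    have := ENNReal.toReal_mono hfin hup
    rwa [ENNReal.toReal_add (ENNReal.mul_ne_top ENNReal.ofReal_ne_top (measure_ne_top _ _))
      (ne_top_of_le_ne_top hk hkP), ENNReal.toReal_mul, ENNReal.toReal_ofReal ha] at this
  have hmax : (fun x => max (g x - a) 0) = {x | a ≤ g x}.indicator fun x => g x - a := by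
    ext x
    by_cases hx : a ≤ g x
    · simp [hx]
    · simp [hx, (not_le.1 hx).le]
  calc ∫ x in B, max (g x - a) 0 ∂ν₁ = ∫ x in P, (g x - a) ∂ν₁ := by
        rw [hmax, setIntegral_indicator (measurableSet_le measurable_const hg)]
    _ = ν₂.real P - a * ν₁.real P := by
        rw [integral_sub Measure.integrable_toReal_rnDeriv.integrableOn
          (integrable_const a).integrableOn, Measure.setIntegral_toReal_rnDeriv hac,
          setIntegral_const, smul_eq_mul, mul_comm]
    _ ≤ (∫⁻ x in P, k x ∂ν₁).toReal := by linarith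
    _ ≤ (∫⁻ x in B, k x ∂ν₁).toReal := ENNReal.toReal_mono hk hkP

lemma setIntegral_abs_toReal_rnDeriv_sub_le (ha : 0 ≤ a) (hρ : ν₂ = ν₁.withDensity ρ)
    (hρk : ∀ x, ρ x ≤ ENNReal.ofReal a + k x) (hB : MeasurableSet B)
    (hk : ∫⁻ x in B, k x ∂ν₁ ≠ ∞) :
    ∫ x in B, |(ν₂.rnDeriv ν₁ x).toReal - a| ∂ν₁
      ≤ 2 * (∫⁻ x in B, k x ∂ν₁).toReal + (a * ν₁.real B - ν₂.real B) := by
  have hac : ν₂ ≪ ν₁ := hρ ▸ withDensity_absolutelyContinuous _ _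
  have hint : Integrable (fun x => (ν₂.rnDeriv ν₁ x).toReal - a) (ν₁.restrict B) :=
    Measure.integrable_toReal_rnDeriv.integrableOn.sub (integrable_const a).integrableOn
  have habs : ∀ t : ℝ, |t| = 2 * max t 0 - t := fun t => by
    rcases le_total 0 t with ht | ht
    · rw [abs_of_nonneg ht, max_eq_left ht]; ring
    · rw [abs_of_nonpos ht, max_eq_right ht]; ring
  have hmean : ∫ x in B, ((ν₂.rnDeriv ν₁ x).toReal - a) ∂ν₁ = ν₂.real B - a * ν₁.real B := by
    rw [integral_sub Measure.integrable_toReal_rnDeriv.integrableOn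
      (integrable_const a).integrableOn, Measure.setIntegral_toReal_rnDeriv hac,
      setIntegral_const, smul_eq_mul, mul_comm]
  simp_rw [habs]
  rw [integral_sub (hint.pos_part.const_mul 2) hint, integral_const_mul, hmean]
  linarith [setIntegral_max_toReal_rnDeriv_sub_le ha hρ hρk hB hk]

end RadonNikodym

lemma setIntegral_abs_toReal_rnDeriv_restrict_sub_le {μ₁ μ₂ : Measure α} [IsFiniteMeasure μ₁]
    [IsFiniteMeasure μ₂] {E B : Set α} (hE : MeasurableSet E) (hB : MeasurableSet B)
    {ρ k : α → ℝ≥0∞} {a : ℝ} (ha : 0 ≤ a) (hρ : μ₂.restrict E = (μ₁.restrict E).withDensity ρ)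
    (hρk : ∀ x, ρ x ≤ ENNReal.ofReal a + k x) (hk : ∫⁻ x in B, k x ∂μ₁ ≠ ∞) :
    ∫ x in B, |((μ₂.restrict E).rnDeriv (μ₁.restrict E) x).toReal - a| ∂μ₁.restrict E
      ≤ 2 * (∫⁻ x in B, k x ∂μ₁).toReal - (μ₂.real B - a * μ₁.real B)
        - a * μ₁.real (B \ E) + μ₂.real (B \ E) := by
  have hkE : ∫⁻ x in B, k x ∂μ₁.restrict E ≤ ∫⁻ x in B, k x ∂μ₁ :=
    lintegral_mono' (Measure.restrict_mono subset_rfl Measure.restrict_le_self) le_rfl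
  have hsplit : ∀ μ : Measure α, [IsFiniteMeasure μ] →
      (μ.restrict E).real B = μ.real B - μ.real (B \ E) := fun μ _ => by
    rw [measureReal_restrict_apply hB, ← measureReal_inter_add_sdiff (μ := μ) (s := B) hE]
    ring
  have := setIntegral_abs_toReal_rnDeriv_sub_le ha hρ hρk hB (ne_top_of_le_ne_top hk hkE)
  rw [hsplit, hsplit] at this
  linarith [ENNReal.toReal_mono hk hkE]

/-- Dominates the total variation of `μ₂ - a • μ₁` on `B`. -/
def densityDefect (μ₁ μ₂ : Measure α) (E : Set α) (a : ℝ) (B : Set α) : ℝ :=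
  μ₂.real (B \ E) + a * μ₁.real (B \ E) +
    ∫ x in B, |((μ₂.restrict E).rnDeriv (μ₁.restrict E) x).toReal - a| ∂μ₁.restrict E

lemma abs_integral_sub_mul_integral_le_densityDefect {μ₁ μ₂ : Measure α}
    [IsFiniteMeasure μ₁] [IsFiniteMeasure μ₂] {E B : Set α} (hE : MeasurableSet E)
    (hac : μ₂.restrict E ≪ μ₁.restrict E) {a : ℝ} (ha : 0 ≤ a) {g : α → ℝ} {M : ℝ}
    (hg : Measurable g) (hgM : ∀ x, |g x| ≤ M) (hgB : ∀ x ∉ B, g x = 0) :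
    |∫ x, g x ∂μ₂ - a * ∫ x, g x ∂μ₁| ≤ M * densityDefect μ₁ μ₂ E a B := by
  set rn := fun x => ((μ₂.restrict E).rnDeriv (μ₁.restrict E) x).toReal
  have hint : ∀ μ : Measure α, [IsFiniteMeasure μ] → Integrable g μ := fun μ _ =>
    (integrable_const M).mono' hg.aestronglyMeasurable (ae_of_all _ hgM)
  have hsplit : ∀ μ : Measure α, [IsFiniteMeasure μ] →
      ∫ x, g x ∂μ = ∫ x, g x ∂μ.restrict E + ∫ x, g x ∂μ.restrict Eᶜ := fun μ _ => by
    conv_lhs => rw [← Measure.restrict_add_restrict_compl (μ := μ) hE]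
    exact integral_add_measure (hint _) (hint _)
  have hoff : ∀ μ : Measure α, [IsFiniteMeasure μ] →
      |∫ x, g x ∂μ.restrict Eᶜ| ≤ M * μ.real (B \ E) := fun μ _ => by
    simpa [measureReal_restrict_apply' hE.compl, sdiff_eq] using
      abs_integral_le_of_forall_notMem_eq_zero (μ := μ.restrict Eᶜ) hgM hgB
  have hon : |∫ x, g x ∂μ₂.restrict E - a * ∫ x, g x ∂μ₁.restrict E|
      ≤ M * ∫ x in B, |rn x - a| ∂μ₁.restrict E := by
    have hprod : Integrable (fun x => rn x * g x) (μ₁.restrict E) :=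
      (integrable_toReal_rnDeriv_mul_iff hac).2 (hint _)
    have hdiff : ∫ x, g x ∂μ₂.restrict E - a * ∫ x, g x ∂μ₁.restrict E
        = ∫ x in B, (rn x - a) * g x ∂μ₁.restrict E := by
      rw [setIntegral_eq_integral_of_forall_compl_eq_zero (s := B)
          (f := fun x => (rn x - a) * g x) fun x hx => by simp [hgB x hx],
        ← integral_toReal_rnDeriv_mul hac, ← integral_const_mul,
        ← integral_sub hprod ((hint _).const_mul a)]
      simp_rw [sub_mul]
    rw [hdiff, ← integral_const_mul, ← Real.norm_eq_abs]
    have hdev : Integrable (fun x => |rn x - a|) (μ₁.restrict E) :=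
      ((Measure.integrable_toReal_rnDeriv (μ := μ₂.restrict E)).sub (integrable_const a)).abs
    refine norm_integral_le_of_norm_le (hdev.integrableOn.const_mul M) (ae_of_all _ fun x => ?_)
    rw [Real.norm_eq_abs, abs_mul, mul_comm]
    exact mul_le_mul_of_nonneg_right (hgM x) (abs_nonneg _)
  rw [hsplit μ₁, hsplit μ₂, densityDefect]
  calc _ = |(∫ x, g x ∂μ₂.restrict E - a * ∫ x, g x ∂μ₁.restrict E)
        + ∫ x, g x ∂μ₂.restrict Eᶜ - a * ∫ x, g x ∂μ₁.restrict Eᶜ| := by ring_nf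
    _ ≤ |∫ x, g x ∂μ₂.restrict E - a * ∫ x, g x ∂μ₁.restrict E|
        + |∫ x, g x ∂μ₂.restrict Eᶜ| + a * |∫ x, g x ∂μ₁.restrict Eᶜ| := by
      rw [← abs_of_nonneg ha, ← abs_mul, abs_of_nonneg ha]
      exact (abs_sub _ _).trans (add_le_add_left (abs_add_le _ _) _)
    _ ≤ M * ∫ x in B, |rn x - a| ∂μ₁.restrict E + M * μ₂.real (B \ E)
        + a * (M * μ₁.real (B \ E)) :=
      add_le_add (add_le_add hon (hoff μ₂)) (mul_le_mul_of_nonneg_left (hoff μ₁) ha)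
    _ = _ := by ring

end MeasureTheory

section Rescaling

variable {N : ℕ}

lemma continuous_scaleMap (ξ : Euc N) (r : ℝ) : Continuous (scaleMap ξ r) := by
  unfold scaleMap
  fun_prop

lemma preimage_scaleMap_closedBall (ξ : Euc N) {r : ℝ} (hr : 0 < r) (R : ℝ) :
    scaleMap ξ r ⁻¹' closedBall 0 R = closedBall ξ (r * R) := by
  ext x
  simp [scaleMap, norm_smul, abs_of_pos hr, dist_eq_norm, inv_mul_le_iff₀ hr]

lemma integral_smul_map_scaleMap (ω : Measure (Euc N)) (ξ : Euc N) {c : ℝ} (hc : 0 ≤ c) (r : ℝ)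
    {g : Euc N → ℝ} (hg : Continuous g) :
    ∫ x, g x ∂(ENNReal.ofReal c • ω.map (scaleMap ξ r)) = c * ∫ x, g (scaleMap ξ r x) ∂ω := by
  rw [integral_smul_measure, integral_map (continuous_scaleMap ξ r).aemeasurable
    hg.aestronglyMeasurable, ENNReal.toReal_ofReal hc, smul_eq_mul]

lemma measureReal_smul_map_scaleMap_closedBall (ω : Measure (Euc N)) (ξ : Euc N) {c r : ℝ}
    (hc : 0 ≤ c) (hr : 0 < r) (R : ℝ) :
    (ENNReal.ofReal c • ω.map (scaleMap ξ r)).real (closedBall 0 R)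
      = c * ω.real (closedBall ξ (r * R)) := by
  rw [measureReal_ennreal_smul_apply, ENNReal.toReal_ofReal hc, measureReal_def, measureReal_def,
    Measure.map_apply (continuous_scaleMap ξ r).measurable measurableSet_closedBall,
    preimage_scaleMap_closedBall ξ hr]

lemma WeakLim.isBigO_measureReal_closedBall {μ : ℕ → Measure (Euc N)} {ν : Measure (Euc N)}
    (hμν : WeakLim μ ν) (hμ : ∀ j, IsFiniteMeasureOnCompacts (μ j)) {R : ℝ} (hR : 0 < R) :
    (fun j => (μ j).real (closedBall 0 R)) =O[atTop] fun _ => (1 : ℝ) := by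
  let φ : ContDiffBump (0 : Euc N) := ⟨R, R + 1, hR, by linarith⟩
  refine (isBigO_of_le _ fun j => ?_).trans
    ((hμν φ φ.continuous φ.hasCompactSupport).isBigO_one ℝ)
  have := hμ j
  rw [Real.norm_of_nonneg measureReal_nonneg,
    Real.norm_of_nonneg (integral_nonneg fun _ => φ.nonneg)]
  calc (μ j).real (closedBall 0 R) = ∫ x in closedBall 0 R, φ x ∂μ j := by
        rw [setIntegral_congr_fun measurableSet_closedBall fun x hx => φ.one_of_mem_closedBall hx,
          setIntegral_const, smul_eq_mul, mul_one]
    _ ≤ ∫ x, φ x ∂μ j := setIntegral_le_integral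
        (φ.continuous.integrable_of_hasCompactSupport φ.hasCompactSupport)
        (ae_of_all _ fun _ => φ.nonneg)

lemma abs_integral_comp_scaleMap_sub_le {ω₁ ω₂ : Measure (Euc N)} [IsFiniteMeasure ω₁]
    [IsFiniteMeasure ω₂] {E : Set (Euc N)} (hE : MeasurableSet E)
    (hac : ω₂.restrict E ≪ ω₁.restrict E) {a : ℝ} (ha : 0 ≤ a) {f : Euc N → ℝ}
    (hf : Continuous f) {M R : ℝ} (hM : ∀ x, ‖f x‖ ≤ M) (hfR : tsupport f ⊆ closedBall 0 R)
    (ξ : Euc N) {r : ℝ} (hr : 0 < r) :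
    |∫ x, f (scaleMap ξ r x) ∂ω₂ - a * ∫ x, f (scaleMap ξ r x) ∂ω₁|
      ≤ M * densityDefect ω₁ ω₂ E a (closedBall ξ (r * R)) :=
  abs_integral_sub_mul_integral_le_densityDefect hE hac ha
    (hf.comp (continuous_scaleMap ξ r)).measurable (fun _ => hM _) fun _ hx =>
      image_eq_zero_of_notMem_tsupport fun hx' => hx (preimage_scaleMap_closedBall ξ hr R ▸ hfR hx')

lemma tendsto_mul_densityDefect_closedBall {ω₁ ω₂ : Measure (Euc N)} [IsFiniteMeasure ω₁]
    {E : Set (Euc N)} {a : ℝ} {ξ : Euc N}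
    (hdefect : (fun s => densityDefect ω₁ ω₂ E a (closedBall ξ s))
      =o[𝓝[>] 0] fun s => ω₁.real (closedBall ξ s))
    {c r : ℕ → ℝ} (hc : ∀ j, 0 ≤ c j) (hr : ∀ j, 0 < r j) (hr0 : Tendsto r atTop (𝓝 0))
    {ωinf : Measure (Euc N)}
    (hconv : WeakLim (fun j => ENNReal.ofReal (c j) • ω₁.map (scaleMap ξ (r j))) ωinf)
    {R : ℝ} (hR : 0 < R) :
    Tendsto (fun j => c j * densityDefect ω₁ ω₂ E a (closedBall ξ (r j * R))) atTop (𝓝 0) := by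
  have hs : Tendsto (fun j => r j * R) atTop (𝓝[>] 0) := tendsto_nhdsWithin_iff.2
    ⟨by simpa using hr0.mul_const R, Eventually.of_forall fun j => mul_pos (hr j) hR⟩
  have hmass : (fun j => c j * ω₁.real (closedBall ξ (r j * R))) =O[atTop] fun _ => (1 : ℝ) := by
    simpa [measureReal_smul_map_scaleMap_closedBall _ _ (hc _) (hr _)] using
      hconv.isBigO_measureReal_closedBall (fun j => by
        have := (ω₁.map (scaleMap ξ (r j))).smul_finite (ENNReal.ofReal_ne_top (r := c j))
        infer_instance) hR
  exact (isLittleO_one_iff ℝ).1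
    (((isBigO_refl c atTop).mul_isLittleO (hdefect.comp_tendsto hs)).trans_isBigO hmass)

end Rescaling

lemma GammaPt.densityDefect_isLittleO {n : ℕ} {ω₁ ω₂ : Measure (Euc (n+1))}
    [IsFiniteMeasure ω₁] [IsFiniteMeasure ω₂] {E : Set (Euc (n+1))} (hE : MeasurableSet E)
    {h : Euc (n+1) → ℝ}
    (hdens : ω₂.restrict E = (ω₁.restrict E).withDensity (fun x => ENNReal.ofReal (h x)))
    {ξ : Euc (n+1)} (hξ : GammaPt n ω₁ ω₂ E h ξ) :
    (fun s => densityDefect ω₁ ω₂ E (h ξ) (closedBall ξ s))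
      =o[𝓝[>] 0] fun s => ω₁.real (closedBall ξ s) := by
  obtain ⟨hpos, hratio, hleb, hE₁, hE₂⟩ := hξ
  set a := h ξ
  have hmass : (fun s => ω₂.real (closedBall ξ s) - a * ω₁.real (closedBall ξ s))
      =o[𝓝[>] 0] fun s => ω₁.real (closedBall ξ s) :=
    ENNReal.isLittleO_toReal_sub_of_tendsto_div hpos.le (fun _ => measure_ne_top _ _) hratio
  have hO₂ : (fun s => ω₂.real (closedBall ξ s)) =O[𝓝[>] 0] fun s => ω₁.real (closedBall ξ s) := by
    simpa using hmass.isBigO.add ((isBigO_refl _ _).const_mul_left a)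
  have hoff₁ := isLittleO_measureReal_diff_of_tendsto hE hE₁
  have hoff₂ := (isLittleO_measureReal_diff_of_tendsto hE hE₂).trans_isBigO hO₂
  set K := fun s => ∫⁻ x in closedBall ξ s, ENNReal.ofReal |h x - a| ∂ω₁
  have hleb' : Tendsto (fun s => K s / ω₁ (closedBall ξ s)) (𝓝[>] 0) (𝓝 (ENNReal.ofReal 0)) := by
    rwa [ENNReal.ofReal_zero]
  have hK : (fun s => (K s).toReal) =o[𝓝[>] 0] fun s => ω₁.real (closedBall ξ s) := by
    simpa [measureReal_def] using
      ENNReal.isLittleO_toReal_sub_of_tendsto_div le_rfl (fun _ => measure_ne_top _ _) hleb'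
  have hKfin : ∀ᶠ s in 𝓝[>] 0, K s ≠ ∞ :=
    (ENNReal.eventually_ne_top_of_tendsto_div (fun _ => measure_ne_top _ _) ENNReal.ofReal_ne_top
      hleb').mono fun _ hs => hs.1
  have hρk : ∀ x, ENNReal.ofReal (h x) ≤ ENNReal.ofReal a + ENNReal.ofReal |h x - a| := fun x => by
    rw [← ENNReal.ofReal_add hpos.le (abs_nonneg _)]
    exact ENNReal.ofReal_le_ofReal (by linarith [le_abs_self (h x - a)])
  have hdev : (fun s => ∫ x in closedBall ξ s,
      |((ω₂.restrict E).rnDeriv (ω₁.restrict E) x).toReal - a| ∂ω₁.restrict E)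
      =o[𝓝[>] 0] fun s => ω₁.real (closedBall ξ s) := by
    refine IsBigO.trans_isLittleO (IsBigO.of_bound' ?_)
      ((((hK.const_mul_left 2).sub hmass).sub (hoff₁.const_mul_left a)).add hoff₂)
    filter_upwards [hKfin] with s hs
    rw [Real.norm_of_nonneg (integral_nonneg fun _ => abs_nonneg _)]
    exact (setIntegral_abs_toReal_rnDeriv_restrict_sub_le hE measurableSet_closedBall hpos.le
      hdens hρk hs).trans (le_abs_self _)
  exact (hoff₂.add (hoff₁.const_mul_left a)).add hdev

theorem statement10_general (n : ℕ)
    (Ω₁ Ω₂ : Set (Euc (n+1)))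
    (p₁ p₂ : Euc (n+1))
    (ω₁ ω₂ : Measure (Euc (n+1)))
    (hω₁ : IsHarmonicMeasure Ω₁ p₁ ω₁) (hω₂ : IsHarmonicMeasure Ω₂ p₂ ω₂)
    (E : Set (Euc (n+1))) (hE : MeasurableSet E)
    (h : Euc (n+1) → ℝ)
    (hdens : ω₂.restrict E = (ω₁.restrict E).withDensity (fun x => ENNReal.ofReal (h x)))
    (ξ : Euc (n+1)) (hξ : GammaPt n ω₁ ω₂ E h ξ)
    (c r : ℕ → ℝ) (hc : ∀ j, 0 ≤ c j) (hr : ∀ j, 0 < r j)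
    (hr0 : Tendsto r atTop (𝓝 0))
    (ωinf : Measure (Euc (n+1)))
    (hconv : WeakLim (fun j => ENNReal.ofReal (c j) • (ω₁.map (scaleMap ξ (r j)))) ωinf) :
    WeakLim (fun j => ENNReal.ofReal (c j) • (ω₂.map (scaleMap ξ (r j))))
      (ENNReal.ofReal (h ξ) • ωinf) := by
  have := hω₁.1
  have := hω₂.1
  intro f hf hfc
  obtain ⟨M, hM⟩ := hfc.exists_bound_of_continuous hf
  obtain ⟨R, hR, hfR⟩ : ∃ R, 0 < R ∧ tsupport f ⊆ closedBall 0 R := by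
    obtain ⟨R, hR⟩ := hfc.isBounded.subset_closedBall 0
    exact ⟨max R 1, by positivity, hR.trans (closedBall_subset_closedBall (le_max_left _ _))⟩
  have hdefect := tendsto_mul_densityDefect_closedBall (hξ.densityDefect_isLittleO hE hdens)
    hc hr hr0 hconv hR
  have hgap : Tendsto (fun j => c j * ∫ x, f (scaleMap ξ (r j) x) ∂ω₂
      - h ξ * (c j * ∫ x, f (scaleMap ξ (r j) x) ∂ω₁)) atTop (𝓝 0) := by
    refine squeeze_zero_norm (fun j => ?_) (by simpa using hdefect.const_mul M)
    rw [Real.norm_eq_abs, mul_left_comm, ← mul_sub, abs_mul, abs_of_nonneg (hc j), mul_left_comm]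
    exact mul_le_mul_of_nonneg_left (abs_integral_comp_scaleMap_sub_le hE
      (hdens ▸ withDensity_absolutelyContinuous _ _) hξ.1.le hf hM hfR ξ (hr j)) (hc j)
  have hlim := hconv f hf hfc
  simp only [integral_smul_map_scaleMap _ _ (hc _) _ hf] at hlim ⊢
  rw [integral_smul_measure, ENNReal.toReal_ofReal hξ.1.le, smul_eq_mul]
  simpa using hgap.add (hlim.const_mul (h ξ))

/-- **Lemma 5.2.** Let `Ω₁, Ω₂ ⊆ ℝ^{n+1}` be disjoint domains with harmonic measures
mutually absolutely continuous on `E ⊆ ∂Ω₁ ∩ ∂Ω₂`, and let `ξ ∈ E` be a point where the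
density `h(ξ) = dω₂/dω₁(ξ) ∈ (0,∞)` exists, `ξ` is a Lebesgue point of `h` and `E` has
density one for both measures. If `c_j ≥ 0`, `r_j → 0` and
`c_j T_{ξ,r_j}[ω₁] → ω₁^∞` weakly, then `c_j T_{ξ,r_j}[ω₂] → h(ξ) ω₁^∞` weakly. -/
theorem statement10 (n : ℕ) (hn : 2 ≤ n)
    (Ω₁ Ω₂ : Set (Euc (n+1))) (hΩ₁ : DomainSet Ω₁) (hΩ₂ : DomainSet Ω₂)
    (hdisj : Disjoint Ω₁ Ω₂)
    (p₁ p₂ : Euc (n+1)) (hp₁ : p₁ ∈ Ω₁) (hp₂ : p₂ ∈ Ω₂)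
    (ω₁ ω₂ : Measure (Euc (n+1)))
    (hω₁ : IsHarmonicMeasure Ω₁ p₁ ω₁) (hω₂ : IsHarmonicMeasure Ω₂ p₂ ω₂)
    (E : Set (Euc (n+1))) (hE : MeasurableSet E)
    (hEsub : E ⊆ frontier Ω₁ ∩ frontier Ω₂)
    (hac : MutuallyAC (ω₁.restrict E) (ω₂.restrict E))
    (h : Euc (n+1) → ℝ)
    (hdens : ω₂.restrict E = (ω₁.restrict E).withDensity (fun x => ENNReal.ofReal (h x)))
    (ξ : Euc (n+1)) (hξE : ξ ∈ E) (hξ : GammaPt n ω₁ ω₂ E h ξ)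
    (c r : ℕ → ℝ) (hc : ∀ j, 0 ≤ c j) (hr : ∀ j, 0 < r j)
    (hr0 : Tendsto r atTop (𝓝 0))
    (ωinf : Measure (Euc (n+1)))
    (hconv : WeakLim (fun j => ENNReal.ofReal (c j) • (ω₁.map (scaleMap ξ (r j)))) ωinf) :
    WeakLim (fun j => ENNReal.ofReal (c j) • (ω₂.map (scaleMap ξ (r j))))
      (ENNReal.ofReal (h ξ) • ωinf) :=
  statement10_general n Ω₁ Ω₂ p₁ p₂ ω₁ ω₂ hω₁ hω₂ E hE h hdens ξ hξ c r hc hr hr0 ωinf hconv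

end
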